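/- Let φ, α, κ, γ̃_ij, A_ij, Γ_i be smooth fields on ℝ × ℝ³ satisfying the linearized BSSN evolution equations (E3) and (E5). Then at every point of ℝ × ℝ³ and for each i, the time derivative of the momentum constraint quantity M_i := ∂_l A_il − (2/3)∂_i κ is given by ∂_t M_i = −(1/2)Δ(∂_m γ̃_im) + (1/2)∂_i(∂_l Γ_l) + (1/2)ΔΓ_i − 4∂_i Δφ. -/

import Mathlib

noncomputable section

/-- Spacetime ℝ × ℝ³. -/
abbrev Spc : Type := ℝ × (Fin 3 → ℝ)

/-- Time derivative ∂_t. -/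
noncomputable def pt (f : Spc → ℝ) : Spc → ℝ :=
  fun p => deriv (fun s => f (s, p.2)) p.1

/-- Spatial partial derivative ∂_i. -/
noncomputable def ps (i : Fin 3) (f : Spc → ℝ) : Spc → ℝ :=
  fun p => deriv (fun s => f (p.1, Function.update p.2 i s)) (p.2 i)

/-- Spatial Laplacian Δ = Σ_i ∂_i ∂_i. -/
noncomputable def lap (f : Spc → ℝ) : Spc → ℝ :=
  fun p => ∑ i : Fin 3, ps i (ps i f) p

/-- Kronecker delta δ_ij. -/
noncomputable def kron (i j : Fin 3) : ℝ := if i = j then 1 else 0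

/-!
On smooth fields, `∂_t` and `∂_i` are the derivatives `fderiv ℝ f p v` along fixed directions
`v` of `ℝ × ℝ³`, hence linear and, by the symmetry of second derivatives, mutually commuting.
Thus `∂_t M_i = ∂_l (∂_t A_il) − (2/3) ∂_i (∂_t κ)`. Inserting (E3) and (E5) and commuting the
spatial derivatives, the `α`-terms `−∂_i Δα + (1/3) ∂_i Δα + (2/3) ∂_i Δα` cancel, and the two
`φ`-terms add up to `−4 ∂_i Δφ`.
-/

open scoped ContDiff

section SecondDerivative

variable {E F : Type*} [NormedAddCommGroup E] [NormedSpace ℝ E] [NormedAddCommGroup F]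
  [NormedSpace ℝ F] {f : E → F} {n : WithTop ℕ∞}

theorem ContDiff.differentiable_fderiv_apply (hf : ContDiff ℝ n f) (hn : 2 ≤ n) (v : E) :
    Differentiable ℝ fun y => fderiv ℝ f y v :=
  ((hf.fderiv_right (m := 1) hn).clm_apply contDiff_const).differentiable one_ne_zero

theorem fderiv_fderiv_apply_comm (hf : ContDiff ℝ n f) (hn : 2 ≤ n) (x v w : E) :
    fderiv ℝ (fun y => fderiv ℝ f y w) x v = fderiv ℝ (fun y => fderiv ℝ f y v) x w := by
  have hdf : Differentiable ℝ (fderiv ℝ f) :=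
    (hf.fderiv_right (m := 1) hn).differentiable one_ne_zero
  rw [fderiv_clm_apply (hdf x) (differentiableAt_const w),
    fderiv_clm_apply (hdf x) (differentiableAt_const v)]
  simpa using hf.contDiffAt.isSymmSndFDerivAt (by simpa using hn) v w

end SecondDerivative

section PartialDerivatives

variable {f g : Spc → ℝ} {p : Spc}

theorem ps_eq_fderiv (hf : DifferentiableAt ℝ f p) (i : Fin 3) :
    ps i f p = fderiv ℝ f p (0, Pi.single i 1) := by
  have hline :
      HasDerivAt (fun s => ((p.1, Function.update p.2 i s) : Spc)) (0, Pi.single i 1) (p.2 i) :=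
    (hasDerivAt_const _ _).prodMk (hasDerivAt_update p.2 i _)
  refine (HasFDerivAt.comp_hasDerivAt _ ?_ hline).deriv
  simpa using hf.hasFDerivAt

theorem pt_eq_fderiv (hf : DifferentiableAt ℝ f p) : pt f p = fderiv ℝ f p (1, 0) :=
  (hf.hasFDerivAt.comp_hasDerivAt p.1 ((hasDerivAt_id _).prodMk (hasDerivAt_const _ p.2))).deriv

theorem ps_fun_add (hf : DifferentiableAt ℝ f p) (hg : DifferentiableAt ℝ g p) (i : Fin 3) :
    ps i (fun q => f q + g q) p = ps i f p + ps i g p := by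
  rw [ps_eq_fderiv (hf.fun_add hg), fderiv_fun_add hf hg, ps_eq_fderiv hf, ps_eq_fderiv hg]
  rfl

theorem ps_fun_sub (hf : DifferentiableAt ℝ f p) (hg : DifferentiableAt ℝ g p) (i : Fin 3) :
    ps i (fun q => f q - g q) p = ps i f p - ps i g p := by
  rw [ps_eq_fderiv (hf.fun_sub hg), fderiv_fun_sub hf hg, ps_eq_fderiv hf, ps_eq_fderiv hg]
  rfl

theorem ps_fun_sum {ι : Type*} {s : Finset ι} {F : ι → Spc → ℝ}
    (hF : ∀ m ∈ s, DifferentiableAt ℝ (F m) p) (i : Fin 3) :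
    ps i (fun q => ∑ m ∈ s, F m q) p = ∑ m ∈ s, ps i (F m) p := by
  rw [ps_eq_fderiv (DifferentiableAt.fun_sum hF), fderiv_fun_sum hF, sum_apply]
  exact Finset.sum_congr rfl fun m hm => (ps_eq_fderiv (hF m hm) i).symm

theorem ps_const_mul (c : ℝ) (f : Spc → ℝ) (i : Fin 3) (p : Spc) :
    ps i (fun q => c * f q) p = c * ps i f p :=
  congrFun (deriv_const_mul_field' c) _

theorem ps_fun_neg (f : Spc → ℝ) (i : Fin 3) (p : Spc) :
    ps i (fun q => -f q) p = -ps i f p :=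
  deriv.fun_neg

theorem pt_fun_sub (hf : DifferentiableAt ℝ f p) (hg : DifferentiableAt ℝ g p) :
    pt (fun q => f q - g q) p = pt f p - pt g p := by
  rw [pt_eq_fderiv (hf.fun_sub hg), fderiv_fun_sub hf hg, pt_eq_fderiv hf, pt_eq_fderiv hg]
  rfl

theorem pt_fun_sum {ι : Type*} {s : Finset ι} {F : ι → Spc → ℝ}
    (hF : ∀ m ∈ s, DifferentiableAt ℝ (F m) p) :
    pt (fun q => ∑ m ∈ s, F m q) p = ∑ m ∈ s, pt (F m) p := by
  rw [pt_eq_fderiv (DifferentiableAt.fun_sum hF), fderiv_fun_sum hF, sum_apply]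
  exact Finset.sum_congr rfl fun m hm => (pt_eq_fderiv (hF m hm)).symm

theorem pt_const_mul (c : ℝ) (f : Spc → ℝ) (p : Spc) :
    pt (fun q => c * f q) p = c * pt f p :=
  congrFun (deriv_const_mul_field' c) _

theorem ps_ps_comm {n : WithTop ℕ∞} (hf : ContDiff ℝ n f) (hn : 2 ≤ n) (i j : Fin 3) :
    ps i (ps j f) = ps j (ps i f) := by
  have hf' := hf.differentiable (zero_lt_two.trans_le hn).ne'
  have hps (k : Fin 3) : ps k f = fun q => fderiv ℝ f q (0, Pi.single k 1) :=
    funext fun q => ps_eq_fderiv (hf' q) k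
  funext p
  rw [hps, hps, ps_eq_fderiv (hf.differentiable_fderiv_apply hn _ p),
    ps_eq_fderiv (hf.differentiable_fderiv_apply hn _ p)]
  exact fderiv_fderiv_apply_comm hf hn p _ _

theorem pt_ps_comm {n : WithTop ℕ∞} (hf : ContDiff ℝ n f) (hn : 2 ≤ n) (i : Fin 3) :
    pt (ps i f) = ps i (pt f) := by
  have hf' := hf.differentiable (zero_lt_two.trans_le hn).ne'
  have hps : ps i f = fun q => fderiv ℝ f q (0, Pi.single i 1) :=
    funext fun q => ps_eq_fderiv (hf' q) i
  have hpt : pt f = fun q => fderiv ℝ f q (1, 0) := funext fun q => pt_eq_fderiv (hf' q)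
  funext p
  rw [hps, hpt, pt_eq_fderiv (hf.differentiable_fderiv_apply hn _ p),
    ps_eq_fderiv (hf.differentiable_fderiv_apply hn _ p)]
  exact fderiv_fderiv_apply_comm hf hn p _ _

end PartialDerivatives

section SmoothFields

variable {f : Spc → ℝ}

@[fun_prop]
theorem contDiff_ps (hf : ContDiff ℝ ∞ f) (i : Fin 3) : ContDiff ℝ ∞ (ps i f) := by
  rw [show ps i f = fun p => fderiv ℝ f p (0, Pi.single i 1) from
    funext fun p => ps_eq_fderiv (hf.differentiable (by simp) p) i]
  exact (hf.fderiv_right (m := ∞) le_rfl).clm_apply contDiff_const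

@[fun_prop]
theorem contDiff_lap (hf : ContDiff ℝ ∞ f) : ContDiff ℝ ∞ (lap f) := by
  unfold lap
  fun_prop

theorem sum_ps_ps_eq_ps_sum_ps {g : Fin 3 → Spc → ℝ} (hg : ∀ l, ContDiff ℝ ∞ (g l)) (i : Fin 3)
    (p : Spc) : ∑ l, ps l (ps i (g l)) p = ps i (fun q => ∑ l, ps l (g l) q) p := by
  rw [ps_fun_sum fun l _ => (contDiff_ps (hg l) l).differentiable (by simp) p]
  exact Finset.sum_congr rfl fun l _ => by rw [ps_ps_comm (hg l) (by norm_cast)]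

theorem sum_ps_ps_ps_eq_ps_lap (hf : ContDiff ℝ ∞ f) (i : Fin 3) (p : Spc) :
    ∑ l, ps l (ps i (ps l f)) p = ps i (lap f) p :=
  sum_ps_ps_eq_ps_sum_ps (contDiff_ps hf) i p

theorem sum_ps_lap_eq_lap_sum_ps {g : Fin 3 → Spc → ℝ} (hg : ∀ l, ContDiff ℝ ∞ (g l)) (p : Spc) :
    ∑ l, ps l (lap (g l)) p = lap (fun q => ∑ l, ps l (g l) q) p := by
  have hdiv (j : Fin 3) : ps j (fun q => ∑ l, ps l (g l) q) = fun q => ∑ l, ps l (ps j (g l)) q :=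
    funext fun q => (sum_ps_ps_eq_ps_sum_ps hg j q).symm
  simp only [lap, hdiv, ← sum_ps_ps_eq_ps_sum_ps fun l => contDiff_ps (hg l) _]
  rw [Finset.sum_comm]
  exact Finset.sum_congr rfl fun l _ =>
    ps_fun_sum (fun j _ => (contDiff_ps (contDiff_ps (hg l) j) j).differentiable (by simp) p) l

end SmoothFields

theorem sum_kron_mul (i : Fin 3) (c : Fin 3 → ℝ) : ∑ l, kron i l * c l = c i := by
  simp [kron]

def momentum (A : Fin 3 → Fin 3 → Spc → ℝ) (κ : Spc → ℝ) (i : Fin 3) : Spc → ℝ :=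
  fun p => (∑ l, ps l (A i l) p) - (2/3) * ps i κ p

theorem pt_momentum {A : Fin 3 → Fin 3 → Spc → ℝ} {κ : Spc → ℝ} {i : Fin 3}
    (hA : ∀ l, ContDiff ℝ ∞ (A i l)) (hκ : ContDiff ℝ ∞ κ) :
    pt (momentum A κ i) = momentum (fun i l => pt (A i l)) (pt κ) i := by
  funext p
  unfold momentum
  rw [pt_fun_sub (by fun_prop (maxTransitionDepth := 2) (disch := simp))
      (by fun_prop (maxTransitionDepth := 2) (disch := simp)),
    pt_fun_sum fun l _ => (contDiff_ps (hA l) l).differentiable (by simp) p, pt_const_mul]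
  simp only [pt_ps_comm (hA _) (by norm_cast), pt_ps_comm hκ (by norm_cast)]

def rhsE5 (φ α : Spc → ℝ) (Γ : Fin 3 → Spc → ℝ) (γ : Fin 3 → Fin 3 → Spc → ℝ) (i j : Fin 3) :
    Spc → ℝ := fun p =>
  -(1/2) * lap (γ i j) p + (1/2) * (ps i (Γ j) p + ps j (Γ i) p)
    - 2 * ps i (ps j φ) p - 2 * kron i j * lap φ p
    - ps i (ps j α) p + (1/3) * kron i j * lap α p

theorem sum_ps_rhsE5 {φ α : Spc → ℝ} {Γ : Fin 3 → Spc → ℝ} {γ : Fin 3 → Fin 3 → Spc → ℝ}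
    (hφ : ContDiff ℝ ∞ φ) (hα : ContDiff ℝ ∞ α) (hΓ : ∀ i, ContDiff ℝ ∞ (Γ i))
    (hγ : ∀ i j, ContDiff ℝ ∞ (γ i j)) (i : Fin 3) (p : Spc) :
    ∑ l, ps l (rhsE5 φ α Γ γ i l) p =
      -(1/2) * lap (fun q => ∑ m, ps m (γ i m) q) p
        + (1/2) * ps i (fun q => ∑ l, ps l (Γ l) q) p
        + (1/2) * lap (Γ i) p - 4 * ps i (lap φ) p - (2/3) * ps i (lap α) p := by
  have hterm (l : Fin 3) : ps l (rhsE5 φ α Γ γ i l) p =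
      -(1/2) * ps l (lap (γ i l)) p + (1/2) * (ps l (ps i (Γ l)) p + ps l (ps l (Γ i)) p)
        - 2 * ps l (ps i (ps l φ)) p - 2 * kron i l * ps l (lap φ) p
        - ps l (ps i (ps l α)) p + (1/3) * kron i l * ps l (lap α) p := by
    unfold rhsE5
    simp (disch := fun_prop (maxTransitionDepth := 2) (disch := simp)) only
      [ps_fun_add, ps_fun_sub, ps_const_mul]
  have hlapΓ : ∑ l, ps l (ps l (Γ i)) p = lap (Γ i) p := rfl
  simp only [hterm, hlapΓ, Finset.sum_add_distrib, Finset.sum_sub_distrib, mul_assoc,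
    ← Finset.mul_sum, sum_kron_mul, sum_ps_lap_eq_lap_sum_ps (hγ i), sum_ps_ps_eq_ps_sum_ps hΓ,
    sum_ps_ps_ps_eq_ps_lap hφ, sum_ps_ps_ps_eq_ps_lap hα]
  ring

theorem momentum_constraint_time_derivative_general
    (φ α κ : Spc → ℝ) (Γ : Fin 3 → Spc → ℝ)
    (γ A : Fin 3 → Fin 3 → Spc → ℝ)
    (hφ : ContDiff ℝ (⊤ : ℕ∞) φ) (hα : ContDiff ℝ (⊤ : ℕ∞) α)
    (hκ : ContDiff ℝ (⊤ : ℕ∞) κ)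
    (hΓ : ∀ i, ContDiff ℝ (⊤ : ℕ∞) (Γ i))
    (hγ : ∀ i j, ContDiff ℝ (⊤ : ℕ∞) (γ i j)) (hA : ∀ i j, ContDiff ℝ (⊤ : ℕ∞) (A i j))
    (E3 : ∀ p, pt κ p = -(lap α p))
    (E5 : ∀ i j p, pt (A i j) p =
      -(1/2) * lap (γ i j) p + (1/2) * (ps i (Γ j) p + ps j (Γ i) p)
        - 2 * ps i (ps j φ) p - 2 * kron i j * lap φ p
        - ps i (ps j α) p + (1/3) * kron i j * lap α p)
    (M : Fin 3 → Spc → ℝ)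
    (hM : ∀ i, M i = fun p => (∑ l, ps l (A i l) p) - (2/3) * ps i κ p) :
    ∀ i p, pt (M i) p =
      -(1/2) * lap (fun q => ∑ m, ps m (γ i m) q) p
        + (1/2) * ps i (fun q => ∑ l, ps l (Γ l) q) p
        + (1/2) * lap (Γ i) p - 4 * ps i (lap φ) p := by
  intro i p
  have hptA : (fun i l => pt (A i l)) = rhsE5 φ α Γ γ := funext₂ fun i l => funext (E5 i l)
  have hptκ : pt κ = fun q => -lap α q := funext E3
  rw [show M i = momentum A κ i from hM i, pt_momentum (hA i) hκ, hptA, hptκ, momentum,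
    ps_fun_neg, sum_ps_rhsE5 hφ hα hΓ hγ]
  ring

/-- If (E3) and (E5) hold, then the time derivative of the momentum constraint
quantity `M_i = ∂_l A_il − (2/3)∂_i κ` is
`∂_t M_i = −(1/2)Δ(∂_m γ̃_im) + (1/2)∂_i(∂_l Γ_l) + (1/2)ΔΓ_i − 4∂_i Δφ`. -/
theorem momentum_constraint_time_derivative
    (φ α κ : Spc → ℝ) (Γ : Fin 3 → Spc → ℝ)
    (γ A : Fin 3 → Fin 3 → Spc → ℝ)
    (hφ : ContDiff ℝ (⊤ : ℕ∞) φ) (hα : ContDiff ℝ (⊤ : ℕ∞) α)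
    (hκ : ContDiff ℝ (⊤ : ℕ∞) κ)
    (hΓ : ∀ i, ContDiff ℝ (⊤ : ℕ∞) (Γ i))
    (hγ : ∀ i j, ContDiff ℝ (⊤ : ℕ∞) (γ i j)) (hA : ∀ i j, ContDiff ℝ (⊤ : ℕ∞) (A i j))
    (hγsym : ∀ i j, γ i j = γ j i) (hAsym : ∀ i j, A i j = A j i)
    (E3 : ∀ p, pt κ p = -(lap α p))
    (E5 : ∀ i j p, pt (A i j) p =
      -(1/2) * lap (γ i j) p + (1/2) * (ps i (Γ j) p + ps j (Γ i) p)
        - 2 * ps i (ps j φ) p - 2 * kron i j * lap φ p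
        - ps i (ps j α) p + (1/3) * kron i j * lap α p)
    (M : Fin 3 → Spc → ℝ)
    (hM : ∀ i, M i = fun p => (∑ l, ps l (A i l) p) - (2/3) * ps i κ p) :
    ∀ i p, pt (M i) p =
      -(1/2) * lap (fun q => ∑ m, ps m (γ i m) q) p
        + (1/2) * ps i (fun q => ∑ l, ps l (Γ l) q) p
        + (1/2) * lap (Γ i) p - 4 * ps i (lap φ) p :=
  momentum_constraint_time_derivative_general φ α κ Γ γ A hφ hα hκ hΓ hγ hA E3 E5 M hM
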